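/- Let d ≥ 2 be an integer. For every bounded Borel set A ⊆ ℝ^{d−1} and every bounded Borel set B ⊆ ℝ, lim_{β→∞} c'_{d,β} (2β)^{−d/2} ∫_A ∫_B 1{s < 2β} (1 − s/(2β))^{−β} ds dw = (2π)^{−d/2} · λ_{d−1}(A) · ∫_B e^{s/2} ds, where λ_{d−1} is Lebesgue measure on ℝ^{d−1}. -/

import Mathlib

/-!
The `w`-integral only contributes the factor `λ(A)`. In the height variable,
`(1 - s/(2β))^{-β} → e^{s/2}` pointwise, with the bound `e^{|s|}` as soon as `β ≥ |s|`, so dominated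
convergence handles the `s`-integral over the bounded set `B`. For the constant, Wendel's limit
`Γ(β)/(Γ(β - c) β^c) → 1` (log-convexity of `Γ` for `c ≤ 1`, then the functional equation) gives
`c'_{d,β} (2β)^{-d/2} → (2π)^{-d/2}`.
-/

open MeasureTheory

/-- The constant `c'_{d,β} = Γ(β)/(π^{d/2} Γ(β-d/2))`. -/
noncomputable def cPrime (d : ℕ) (β : ℝ) : ℝ :=
  Real.Gamma β / (Real.pi ^ ((d : ℝ) / 2) * Real.Gamma (β - (d : ℝ) / 2))

open Filter Real Set Topology

lemma tendsto_add_const_div_self (a : ℝ) : Tendsto (fun x : ℝ => (x + a) / x) atTop (𝓝 1) := by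
  have h : Tendsto (fun x : ℝ => 1 + a / x) atTop (𝓝 (1 + 0)) :=
    tendsto_const_nhds.add (tendsto_const_nhds.div_atTop tendsto_id)
  rw [add_zero] at h
  refine h.congr' ?_
  filter_upwards [eventually_ne_atTop 0] with x hx
  field_simp

namespace Real

/-- Wendel's inequality, from the log-convexity of `Γ` on the segment `[x, x + 1]`. -/
lemma Gamma_add_le_Gamma_mul_rpow {x a : ℝ} (hx : 0 < x) (ha₀ : 0 ≤ a) (ha₁ : a ≤ 1) :
    Gamma (x + a) ≤ Gamma x * x ^ a := by
  have h := convexOn_log_Gamma.2 (mem_Ioi.2 hx) (mem_Ioi.2 (by linarith : 0 < x + 1))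
    (sub_nonneg.2 ha₁) ha₀ (by ring)
  simp only [Function.comp, smul_eq_mul] at h
  rw [show (1 - a) * x + a * (x + 1) = x + a by ring, Gamma_add_one hx.ne',
    log_mul hx.ne' (Gamma_pos_of_pos hx).ne'] at h
  rw [← log_le_log_iff (Gamma_pos_of_pos (by linarith)) (by positivity),
    log_mul (Gamma_pos_of_pos hx).ne' (by positivity), log_rpow hx]
  linarith

lemma tendsto_Gamma_add_div_Gamma_mul_rpow_of_le_one {a : ℝ} (ha₀ : 0 ≤ a) (ha₁ : a ≤ 1) :
    Tendsto (fun x => Gamma (x + a) / (Gamma x * x ^ a)) atTop (𝓝 1) := by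
  have hlow : Tendsto (fun x : ℝ => ((x + a) / x)⁻¹ ^ (1 - a)) atTop (𝓝 1) := by
    simpa using ((tendsto_add_const_div_self a).inv₀ one_ne_zero).rpow_const
      (.inl (by norm_num)) (p := 1 - a)
  refine tendsto_of_tendsto_of_tendsto_of_le_of_le' hlow tendsto_const_nhds ?_ ?_
  · filter_upwards [eventually_gt_atTop 0] with x hx
    have hxa : 0 < x + a := by linarith
    -- Wendel's inequality at `x + a` with exponent `1 - a`
    have key := Gamma_add_le_Gamma_mul_rpow hxa (sub_nonneg.2 ha₁) (by linarith)
    rw [show x + a + (1 - a) = x + 1 by ring, Gamma_add_one hx.ne'] at key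
    rw [inv_div, div_rpow hx.le hxa.le, div_le_div_iff₀ (by positivity)
      (mul_pos (Gamma_pos_of_pos hx) (by positivity))]
    calc x ^ (1 - a) * (Gamma x * x ^ a) = x * Gamma x := by
          rw [mul_left_comm, ← rpow_add hx, sub_add_cancel, rpow_one, mul_comm]
      _ ≤ _ := key
  · filter_upwards [eventually_gt_atTop 0] with x hx
    rw [div_le_one (mul_pos (Gamma_pos_of_pos hx) (by positivity))]
    exact Gamma_add_le_Gamma_mul_rpow hx ha₀ ha₁

lemma tendsto_Gamma_add_div_Gamma_mul_rpow {a : ℝ} (ha : 0 ≤ a) :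
    Tendsto (fun x => Gamma (x + a) / (Gamma x * x ^ a)) atTop (𝓝 1) := by
  suffices h : ∀ n : ℕ, ∀ r ∈ Icc (0 : ℝ) 1,
      Tendsto (fun x => Gamma (x + (r + n)) / (Gamma x * x ^ (r + n))) atTop (𝓝 1) by
    have hfloor := Nat.floor_le ha
    simpa using h ⌊a⌋₊ (a - ⌊a⌋₊) ⟨by linarith, by linarith [Nat.lt_floor_add_one a]⟩
  intro n r ⟨hr₀, hr₁⟩
  induction n with
  | zero => simpa using tendsto_Gamma_add_div_Gamma_mul_rpow_of_le_one hr₀ hr₁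
  | succ n ih =>
    have h := ih.mul (tendsto_add_const_div_self (r + n))
    rw [mul_one] at h
    refine h.congr' ?_
    filter_upwards [eventually_gt_atTop 0] with x hx
    have hxb : 0 < x + (r + n) := by positivity
    rw [Nat.cast_succ, ← add_assoc r, ← add_assoc x (r + n) 1, Gamma_add_one hxb.ne',
      rpow_add_one hx.ne']
    have := Gamma_pos_of_pos hx
    field_simp

lemma tendsto_Gamma_div_Gamma_sub_mul_rpow {c : ℝ} (hc : 0 ≤ c) :
    Tendsto (fun x => Gamma x / (Gamma (x - c) * x ^ c)) atTop (𝓝 1) := by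
  have hshift := (tendsto_Gamma_add_div_Gamma_mul_rpow hc).comp
    (tendsto_atTop_add_const_right atTop (-c) tendsto_id)
  have hratio := (tendsto_add_const_div_self (-c)).rpow_const (.inl one_ne_zero) (p := c)
  have h := hshift.mul hratio
  rw [one_rpow, mul_one] at h
  refine h.congr' ?_
  filter_upwards [eventually_gt_atTop c, eventually_gt_atTop 0] with x hxc hx
  have hxc' : 0 < x - c := by linarith
  simp only [Function.comp_apply, id, ← sub_eq_add_neg, sub_add_cancel]
  rw [div_rpow hxc'.le hx.le]
  have := Gamma_pos_of_pos hxc'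
  field_simp

end Real

lemma tendsto_cPrime_mul_rpow (d : ℕ) :
    Tendsto (fun β => cPrime d β * (2 * β) ^ (-(d : ℝ) / 2)) atTop
      (𝓝 ((2 * π) ^ (-(d : ℝ) / 2))) := by
  simp only [cPrime, neg_div]
  set c : ℝ := d / 2
  have hc : 0 ≤ c := by positivity
  have h := (tendsto_Gamma_div_Gamma_sub_mul_rpow hc).mul_const ((2 * π) ^ (-c))
  rw [one_mul] at h
  refine h.congr' ?_
  filter_upwards [eventually_gt_atTop c, eventually_gt_atTop 0] with β hβc hβ
  have := Gamma_pos_of_pos (sub_pos.2 hβc)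
  rw [mul_rpow zero_le_two hβ.le, mul_rpow zero_le_two pi_pos.le,
    rpow_neg hβ.le, rpow_neg pi_pos.le]
  field_simp

noncomputable def betaPrimeHeightDensity (β s : ℝ) : ℝ :=
  if s < 2 * β then (1 - s / (2 * β)) ^ (-β) else 0

lemma measurable_betaPrimeHeightDensity (β : ℝ) : Measurable (betaPrimeHeightDensity β) :=
  Measurable.ite (measurableSet_lt measurable_id measurable_const) (by fun_prop) measurable_const

lemma tendsto_betaPrimeHeightDensity (s : ℝ) :
    Tendsto (fun β => betaPrimeHeightDensity β s) atTop (𝓝 (exp (s / 2))) := by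
  have hmul : Tendsto (fun β : ℝ => β * (-s / (2 * β))) atTop (𝓝 (-s / 2)) := by
    refine tendsto_const_nhds.congr' ?_
    filter_upwards [eventually_ne_atTop 0] with β hβ
    field_simp
  have h := (tendsto_one_add_rpow_exp_of_tendsto hmul).inv₀ (exp_ne_zero _)
  rw [← exp_neg, neg_div, neg_neg] at h
  refine h.congr' ?_
  filter_upwards [eventually_gt_atTop (s / 2), eventually_gt_atTop 0] with β hβs hβ
  have hs : s < 2 * β := by linarith
  have hbase : 0 < 1 - s / (2 * β) := by rw [sub_pos, div_lt_one (by positivity)]; exact hs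
  rw [betaPrimeHeightDensity, if_pos hs, rpow_neg hbase.le, neg_div, ← sub_eq_add_neg]

lemma norm_betaPrimeHeightDensity_le {β s : ℝ} (hβ : 0 < β) (hs : s ≤ β) :
    ‖betaPrimeHeightDensity β s‖ ≤ exp |s| := by
  have hs2 : s < 2 * β := by linarith
  have hden : 0 < 2 * β - s := by linarith
  have hbase : 0 < 1 - s / (2 * β) := by rw [sub_pos, div_lt_one (by positivity)]; exact hs2
  rw [betaPrimeHeightDensity, if_pos hs2, norm_of_nonneg (rpow_nonneg hbase.le _),
    rpow_def_of_pos hbase, exp_le_exp]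
  have hlog := one_sub_inv_le_log_of_pos hbase
  have hinv : (1 - s / (2 * β))⁻¹ = 2 * β / (2 * β - s) := by field_simp
  calc log (1 - s / (2 * β)) * -β ≤ (1 - (1 - s / (2 * β))⁻¹) * -β :=
        mul_le_mul_of_nonpos_right hlog (by linarith)
    _ = β * s / (2 * β - s) := by rw [hinv]; field_simp; ring
    _ ≤ |s| := by
        rw [div_le_iff₀ hden]
        rcases le_or_gt 0 s with h | h
        · rw [abs_of_nonneg h]; nlinarith
        · rw [abs_of_neg h]; nlinarith

lemma tendsto_setIntegral_betaPrimeHeightDensity {B : Set ℝ} (hB : Bornology.IsBounded B) :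
    Tendsto (fun β => ∫ s in B, betaPrimeHeightDensity β s) atTop
      (𝓝 (∫ s in B, exp (s / 2))) := by
  obtain ⟨M, hBM⟩ := hB.subset_closedBall 0
  refine tendsto_integral_filter_of_dominated_convergence (fun _ => exp M)
    (.of_forall fun β => (measurable_betaPrimeHeightDensity β).aestronglyMeasurable) ?_
    (integrableOn_const hB.measure_lt_top.ne) (.of_forall tendsto_betaPrimeHeightDensity)
  filter_upwards [eventually_gt_atTop 0, eventually_ge_atTop M] with β hβ hβM
  refine ae_restrict_of_ae_restrict_of_subset hBM
    (ae_restrict_of_forall_mem measurableSet_closedBall fun s hs => ?_)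
  rw [mem_closedBall_zero_iff, norm_eq_abs] at hs
  exact (norm_betaPrimeHeightDensity_le hβ (by linarith [le_abs_self s])).trans
    (exp_le_exp.2 hs)

theorem stmt_3_general (d : ℕ)
    (A : Set (EuclideanSpace ℝ (Fin (d - 1))))
    (B : Set ℝ) (hBb : Bornology.IsBounded B) :
    Filter.Tendsto (fun β : ℝ =>
        cPrime d β * (2 * β) ^ (-(d : ℝ) / 2) *
          ∫ _v in A, ∫ s in B, (if s < 2 * β then (1 - s / (2 * β)) ^ (-β) else 0))
      Filter.atTop
      (nhds ((2 * Real.pi) ^ (-(d : ℝ) / 2) * (volume A).toReal *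
        ∫ s in B, Real.exp (s / 2))) := by
  have h := (tendsto_cPrime_mul_rpow d).mul
    ((tendsto_setIntegral_betaPrimeHeightDensity hBb).const_mul (volume A).toReal)
  simpa only [setIntegral_const, smul_eq_mul, measureReal_def, mul_assoc,
    betaPrimeHeightDensity] using h

/-- For bounded Borel `A ⊆ ℝ^{d-1}` and `B ⊆ ℝ`,
`c'_{d,β} (2β)^{-d/2} ∫_A ∫_B 1{s < 2β}(1-s/(2β))^{-β} ds dw →
(2π)^{-d/2} λ_{d-1}(A) ∫_B e^{s/2} ds` as `β → ∞`. -/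
theorem stmt_3 (d : ℕ) (hd : 2 ≤ d)
    (A : Set (EuclideanSpace ℝ (Fin (d - 1)))) (hA : MeasurableSet A)
    (hAb : Bornology.IsBounded A)
    (B : Set ℝ) (hB : MeasurableSet B) (hBb : Bornology.IsBounded B) :
    Filter.Tendsto (fun β : ℝ =>
        cPrime d β * (2 * β) ^ (-(d : ℝ) / 2) *
          ∫ _v in A, ∫ s in B, (if s < 2 * β then (1 - s / (2 * β)) ^ (-β) else 0))
      Filter.atTop
      (nhds ((2 * Real.pi) ^ (-(d : ℝ) / 2) * (volume A).toReal *
        ∫ s in B, Real.exp (s / 2))) :=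
  stmt_3_general d A B hBb
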